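/- arXiv:2505.08720 — 4 statements merged into one kernel-verified Lean document; each statement's English description precedes it below -/
import Mathlib

section
/- Let H be a Hilbert space, P ∈ B(H) an orthogonal projection, F(X) = PXP + P⊥XP⊥ and F⊥(X) = X − F(X) = PXP⊥ + P⊥XP. Then for every T ∈ B(H), the distance from T to the range of F equals ‖F⊥(T)‖, i.e., dist(T, F(B(H))) = ‖PTP⊥ + P⊥TP‖. -/
/-- The off-diagonal compression `A ↦ PAP⊥ + P⊥AP` is norm-nonincreasing. -/
lemma norm_offdiag_le
    {H : Type*} [NormedAddCommGroup H] [InnerProductSpace ℂ H] [CompleteSpace H]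
    (P : H →L[ℂ] H) (hP_adj : ContinuousLinearMap.adjoint P = P) (hP_idem : P * P = P)
    (A : H →L[ℂ] H) :
    ‖P * A * (1 - P) + (1 - P) * A * P‖ ≤ ‖A‖ := by
  set U : H →L[ℂ] H := P + P - 1 with hU
  have hPstar : star P = P := by rw [ContinuousLinearMap.star_eq_adjoint, hP_adj]
  have hstar : star U = U := by
    rw [hU, star_sub, star_add, star_one, hPstar]
  have hU2 : U * U = 1 := by
    have h : U * U = P*P + P*P + P*P + P*P - P - P - P - P + 1 := by
      simp only [hU]; noncomm_ring
    rw [hP_idem] at h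
    rw [h]; abel
  have hnormU : ‖U‖ ≤ 1 := by
    have h1 : ‖star U * U‖ = ‖U‖ * ‖U‖ := CStarRing.norm_star_mul_self
    rw [hstar, hU2] at h1
    have h2 : ‖(1 : H →L[ℂ] H)‖ ≤ 1 := by
      rw [ContinuousLinearMap.one_def]; exact ContinuousLinearMap.norm_id_le
    nlinarith [norm_nonneg U]
  have key : (P * A * (1 - P) + (1 - P) * A * P) + (P * A * (1 - P) + (1 - P) * A * P)
      = A - U * A * U := by
    simp only [hU]; noncomm_ring
  have hUAU : ‖U * A * U‖ ≤ ‖A‖ := by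
    calc ‖U * A * U‖ ≤ ‖U * A‖ * ‖U‖ := norm_mul_le _ _
    _ ≤ ‖U‖ * ‖A‖ * ‖U‖ := by
        have := norm_mul_le U A
        nlinarith [norm_nonneg (U*A), norm_nonneg U, norm_nonneg A]
    _ ≤ 1 * ‖A‖ * 1 := by
        nlinarith [mul_le_mul hnormU hnormU (norm_nonneg U) zero_le_one, norm_nonneg A,
          norm_nonneg U]
    _ = ‖A‖ := by ring
  have h2 : ‖(P * A * (1 - P) + (1 - P) * A * P) + (P * A * (1 - P) + (1 - P) * A * P)‖
      ≤ 2 * ‖A‖ := by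
    rw [key]
    calc ‖A - U * A * U‖ ≤ ‖A‖ + ‖U * A * U‖ := norm_sub_le _ _
    _ ≤ 2 * ‖A‖ := by linarith
  rw [← two_smul ℝ, norm_smul] at h2
  simp at h2
  linarith

/-- The off-diagonal compression kills `PXP + P⊥XP⊥`. -/
lemma offdiag_of_diag_eq_zero
    {H : Type*} [NormedAddCommGroup H] [InnerProductSpace ℂ H] [CompleteSpace H]
    (P : H →L[ℂ] H) (hP_idem : P * P = P) (X : H →L[ℂ] H) :
    P * (P * X * P + (1 - P) * X * (1 - P)) * (1 - P)
      + (1 - P) * (P * X * P + (1 - P) * X * (1 - P)) * P = 0 := by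
  have h1 : P * (1 - P) = 0 := by rw [mul_sub, mul_one, hP_idem, sub_self]
  have h2 : (1 - P) * P = 0 := by rw [sub_mul, one_mul, hP_idem, sub_self]
  have e1 : P * (P * X * P) * (1 - P) = 0 := by
    simp only [mul_assoc]; simp [h1]
  have e2 : P * ((1 - P) * X * (1 - P)) * (1 - P) = 0 := by
    simp only [← mul_assoc]; simp [h1]
  have e3 : (1 - P) * (P * X * P) * P = 0 := by
    simp only [← mul_assoc]; simp [h2]
  have e4 : (1 - P) * ((1 - P) * X * (1 - P)) * P = 0 := by
    simp only [mul_assoc]; simp [h2]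
  rw [mul_add, add_mul, mul_add, add_mul, e1, e2, e3, e4]
  simp

/-- For a Hilbert space `H`, an orthogonal projection `P`, and
`F(X) = PXP + P⊥XP⊥`, the distance from any `T ∈ B(H)` to the range of `F`
equals `‖PTP⊥ + P⊥TP‖`. -/
theorem dist_to_range_F_eq_norm_Fperp
    {H : Type*} [NormedAddCommGroup H] [InnerProductSpace ℂ H] [CompleteSpace H]
    (P : H →L[ℂ] H) (hP_adj : ContinuousLinearMap.adjoint P = P) (hP_idem : P * P = P)
    (T : H →L[ℂ] H) :
    Metric.infDist T {Y : H →L[ℂ] H | ∃ X : H →L[ℂ] H, Y = P * X * P + (1 - P) * X * (1 - P)}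
      = ‖P * T * (1 - P) + (1 - P) * T * P‖ := by
  set S := {Y : H →L[ℂ] H | ∃ X : H →L[ℂ] H, Y = P * X * P + (1 - P) * X * (1 - P)} with hS
  have hmem : (P * T * P + (1 - P) * T * (1 - P)) ∈ S := ⟨T, rfl⟩
  apply le_antisymm
  · -- upper bound: use F(T) ∈ S
    have h := Metric.infDist_le_dist_of_mem (x := T) hmem
    calc Metric.infDist T S ≤ dist T (P * T * P + (1 - P) * T * (1 - P)) := h
    _ = ‖P * T * (1 - P) + (1 - P) * T * P‖ := by
        rw [dist_eq_norm]
        congr 1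
        noncomm_ring
  · -- lower bound
    by_contra hcon
    push_neg at hcon
    rw [Metric.infDist_lt_iff ⟨_, hmem⟩] at hcon
    obtain ⟨Y, ⟨X, rfl⟩, hlt⟩ := hcon
    refine absurd hlt (not_lt.mpr ?_)
    have hlin : P * (T - (P * X * P + (1 - P) * X * (1 - P))) * (1 - P)
        + (1 - P) * (T - (P * X * P + (1 - P) * X * (1 - P))) * P
        = (P * T * (1 - P) + (1 - P) * T * P)
          - (P * (P * X * P + (1 - P) * X * (1 - P)) * (1 - P)
            + (1 - P) * (P * X * P + (1 - P) * X * (1 - P)) * P) := by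
      noncomm_ring
    have hz := offdiag_of_diag_eq_zero P hP_idem X
    rw [hz, sub_zero] at hlin
    have hb := norm_offdiag_le P hP_adj hP_idem (T - (P * X * P + (1 - P) * X * (1 - P)))
    rw [hlin] at hb
    rw [dist_eq_norm]
    exact hb
end

section
/- Let H be a Hilbert space, P an orthogonal projection, F(X) = PXP + P⊥XP⊥, and T ∈ B(H). Then sup{|⟨Tξ, η⟩| : ‖ξ‖ = ‖η‖ = 1, ⟨Xξ, η⟩ = 0 for all X in the range of F} = ‖PTP⊥ + P⊥TP‖. -/
private lemma normalize_norm_one {H : Type*} [NormedAddCommGroup H] [NormedSpace ℂ H]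
    (w : H) (hw : w ≠ 0) : ‖((‖w‖ : ℂ))⁻¹ • w‖ = 1 := by
  have h1 : ‖((‖w‖ : ℂ))⁻¹‖ = ‖w‖⁻¹ := by
    rw [norm_inv]; norm_num
  rw [norm_smul, h1, inv_mul_cancel₀ (norm_ne_zero_iff.mpr hw)]

/-- For an orthogonal projection `P` on a Hilbert space `H`,
`F(X) = PXP + P⊥XP⊥`, and `T ∈ B(H)`, the supremum of `|⟨Tξ, η⟩|` over pairs of
unit vectors annihilating every operator in the range of `F` equals
`‖PTP⊥ + P⊥TP‖`. -/
theorem sup_inner_eq_norm_offdiag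
    {H : Type*} [NormedAddCommGroup H] [InnerProductSpace ℂ H] [CompleteSpace H]
    (P : H →L[ℂ] H) (hP_adj : ContinuousLinearMap.adjoint P = P) (hP_idem : P * P = P)
    (T : H →L[ℂ] H) :
    sSup {r : ℝ | ∃ ξ η : H, ‖ξ‖ = 1 ∧ ‖η‖ = 1 ∧
        (∀ X : H →L[ℂ] H,
          (inner ℂ ((P * X * P + (1 - P) * X * (1 - P)) ξ) η : ℂ) = 0) ∧
        r = ‖(inner ℂ (T ξ) η : ℂ)‖}
      = ‖P * T * (1 - P) + (1 - P) * T * P‖ := by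
  set Q : H →L[ℂ] H := 1 - P with hQdef
  set S : Set ℝ := {r : ℝ | ∃ ξ η : H, ‖ξ‖ = 1 ∧ ‖η‖ = 1 ∧
        (∀ X : H →L[ℂ] H,
          (inner ℂ ((P * X * P + Q * X * Q) ξ) η : ℂ) = 0) ∧
        r = ‖(inner ℂ (T ξ) η : ℂ)‖} with hS
  -- basic facts
  have hPsa : ∀ x y : H, (inner ℂ (P x) y : ℂ) = inner ℂ x (P y) := by
    intro x y
    conv_lhs => rw [← hP_adj]
    exact ContinuousLinearMap.adjoint_inner_left P y x
  have hPP : ∀ x : H, P (P x) = P x := by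
    intro x
    have := congrArg (fun A : H →L[ℂ] H => A x) hP_idem
    simpa using this
  have hQapp : ∀ x : H, Q x = x - P x := by
    intro x; simp [hQdef, ContinuousLinearMap.sub_apply]
  have hPQ : ∀ x : H, P (Q x) = 0 := by
    intro x; rw [hQapp]; simp [map_sub, hPP]
  have hQP : ∀ x : H, Q (P x) = 0 := by
    intro x; rw [hQapp]; simp [hPP]
  have hQQ : ∀ x : H, Q (Q x) = Q x := by
    intro x; rw [hQapp (Q x), hPQ, sub_zero]
  have hQsa : ∀ x y : H, (inner ℂ (Q x) y : ℂ) = inner ℂ x (Q y) := by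
    intro x y
    rw [hQapp, hQapp, inner_sub_left, inner_sub_right, hPsa]
  have hpyth : ∀ x : H, ‖x‖ ^ 2 = ‖P x‖ ^ 2 + ‖Q x‖ ^ 2 := by
    intro x
    have hx : x = P x + Q x := by rw [hQapp]; abel
    have horth : (inner ℂ (P x) (Q x) : ℂ) = 0 := by
      rw [hPsa, hPQ, inner_zero_right]
    have h := norm_add_sq_eq_norm_sq_add_norm_sq_of_inner_eq_zero _ _ horth
    calc ‖x‖ ^ 2 = ‖P x + Q x‖ ^ 2 := by rw [← hx]
      _ = ‖P x‖ ^ 2 + ‖Q x‖ ^ 2 := by rw [pow_two, pow_two, pow_two]; exact h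
  -- admissible pairs
  have hadm1 : ∀ ξ η : H, P ξ = 0 → Q η = 0 →
      (∀ X : H →L[ℂ] H, (inner ℂ ((P * X * P + Q * X * Q) ξ) η : ℂ) = 0) := by
    intro ξ η hξ hη X
    simp only [ContinuousLinearMap.add_apply, ContinuousLinearMap.mul_apply,
      inner_add_left, hξ, map_zero, inner_zero_left]
    rw [hQsa, hη, inner_zero_right, add_zero]
  have hadm2 : ∀ ξ η : H, Q ξ = 0 → P η = 0 →
      (∀ X : H →L[ℂ] H, (inner ℂ ((P * X * P + Q * X * Q) ξ) η : ℂ) = 0) := by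
    intro ξ η hξ hη X
    simp only [ContinuousLinearMap.add_apply, ContinuousLinearMap.mul_apply,
      inner_add_left, hξ, map_zero, inner_zero_left]
    rw [hPsa, hη, inner_zero_right, zero_add]
  -- S is bounded above by ‖T‖
  have hbdd : BddAbove S := by
    refine ⟨‖T‖, ?_⟩
    rintro r ⟨ξ, η, hξ, hη, _, rfl⟩
    calc ‖(inner ℂ (T ξ) η : ℂ)‖ ≤ ‖T ξ‖ * ‖η‖ := norm_inner_le_norm _ _
      _ ≤ ‖T‖ * ‖ξ‖ * ‖η‖ := by gcongr; exact T.le_opNorm ξ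
      _ = ‖T‖ := by rw [hξ, hη]; ring
  -- trivial cases
  by_cases h1 : ∀ x : H, P x = x
  · have hQ0 : ∀ x : H, Q x = 0 := by intro x; rw [hQapp, h1, sub_self]
    have hA : P * T * Q + Q * T * P = 0 := by
      ext x
      simp [ContinuousLinearMap.mul_apply, hQ0]
    have hSe : S = ∅ := by
      rw [Set.eq_empty_iff_forall_notMem]
      rintro r ⟨ξ, η, hξ, hη, hann, rfl⟩
      have h := hann ((innerSL ℂ ξ).smulRight η)
      simp only [ContinuousLinearMap.add_apply, ContinuousLinearMap.mul_apply,
        hQ0, map_zero, inner_zero_left, add_zero, h1,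
        ContinuousLinearMap.smulRight_apply, innerSL_apply_apply] at h
      rw [inner_smul_left, inner_self_eq_norm_sq_to_K, inner_self_eq_norm_sq_to_K,
        hξ, hη] at h
      norm_num at h
    rw [hSe, hA]
    simp [Real.sSup_empty]
  by_cases h0 : ∀ x : H, P x = 0
  · have hQ1 : ∀ x : H, Q x = x := by intro x; rw [hQapp, h0, sub_zero]
    have hA : P * T * Q + Q * T * P = 0 := by
      ext x
      simp [ContinuousLinearMap.mul_apply, h0, hQ1]
    have hSe : S = ∅ := by
      rw [Set.eq_empty_iff_forall_notMem]
      rintro r ⟨ξ, η, hξ, hη, hann, rfl⟩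
      have h := hann ((innerSL ℂ ξ).smulRight η)
      simp only [ContinuousLinearMap.add_apply, ContinuousLinearMap.mul_apply,
        h0, map_zero, inner_zero_left, zero_add, hQ1,
        ContinuousLinearMap.smulRight_apply, innerSL_apply_apply] at h
      rw [inner_smul_left, inner_self_eq_norm_sq_to_K, inner_self_eq_norm_sq_to_K,
        hξ, hη] at h
      norm_num at h
    rw [hSe, hA]
    simp [Real.sSup_empty]
  push_neg at h1 h0
  obtain ⟨x0, hx0⟩ := h1
  obtain ⟨y0, hy0⟩ := h0
  have hx0' : x0 - P x0 ≠ 0 := sub_ne_zero.mpr (Ne.symm hx0)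
  set u0 : H := ((‖x0 - P x0‖ : ℂ))⁻¹ • (x0 - P x0) with hu0def
  have hu0n : ‖u0‖ = 1 := normalize_norm_one _ hx0'
  have hPu0 : P u0 = 0 := by
    rw [hu0def, map_smul, map_sub, hPP, sub_self, smul_zero]
  set v0 : H := ((‖P y0‖ : ℂ))⁻¹ • (P y0) with hv0def
  have hv0n : ‖v0‖ = 1 := normalize_norm_one _ hy0
  have hQv0 : Q v0 = 0 := by
    rw [hv0def, map_smul, hQP, smul_zero]
  have hne : S.Nonempty :=
    ⟨‖(inner ℂ (T u0) v0 : ℂ)‖, u0, v0, hu0n, hv0n, hadm1 u0 v0 hPu0 hQv0, rfl⟩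
  have hs0 : 0 ≤ sSup S := by
    refine le_trans (norm_nonneg (inner ℂ (T u0) v0 : ℂ)) (le_csSup hbdd ?_)
    exact ⟨u0, v0, hu0n, hv0n, hadm1 u0 v0 hPu0 hQv0, rfl⟩
  apply le_antisymm
  · -- sSup S ≤ ‖A‖
    apply csSup_le hne
    rintro r ⟨ξ, η, hξ, hη, hann, rfl⟩
    have key1 : P ξ = 0 ∨ P η = 0 := by
      have h := hann ((innerSL ℂ (P ξ)).smulRight (P η))
      simp only [ContinuousLinearMap.add_apply, ContinuousLinearMap.mul_apply,
        ContinuousLinearMap.smulRight_apply, innerSL_apply_apply, map_smul] at h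
      rw [hPP, hQP, smul_zero, add_zero, inner_smul_left] at h
      have hPη2 : (inner ℂ (P η) η : ℂ) = inner ℂ (P η) (P η) := by
        conv_lhs => rw [← hPP η]
        rw [hPsa]
      rw [hPη2] at h
      rcases mul_eq_zero.mp h with h' | h'
      · left
        have : (inner ℂ (P ξ) (P ξ) : ℂ) = 0 := by
          simpa using congrArg (starRingEnd ℂ) h'
        exact inner_self_eq_zero.mp this
      · right; exact inner_self_eq_zero.mp h'
    have key2 : Q ξ = 0 ∨ Q η = 0 := by
      have h := hann ((innerSL ℂ (Q ξ)).smulRight (Q η))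
      simp only [ContinuousLinearMap.add_apply, ContinuousLinearMap.mul_apply,
        ContinuousLinearMap.smulRight_apply, innerSL_apply_apply, map_smul] at h
      rw [hPQ, smul_zero, zero_add, hQQ, inner_smul_left] at h
      have hQη2 : (inner ℂ (Q η) η : ℂ) = inner ℂ (Q η) (Q η) := by
        conv_lhs => rw [← hQQ η]
        rw [hQsa]
      rw [hQη2] at h
      rcases mul_eq_zero.mp h with h' | h'
      · left
        have : (inner ℂ (Q ξ) (Q ξ) : ℂ) = 0 := by
          simpa using congrArg (starRingEnd ℂ) h'
        exact inner_self_eq_zero.mp this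
      · right; exact inner_self_eq_zero.mp h'
    have heq : (inner ℂ (T ξ) η : ℂ) = inner ℂ ((P * T * Q + Q * T * P) ξ) η := by
      rcases key1 with hPξ | hPη
      · have hQη : Q η = 0 := by
          rcases key2 with hQξ | h
          · exfalso
            have hz : ξ = 0 := by
              have := hQapp ξ; rw [hQξ, hPξ] at this
              simpa using this.symm
            rw [hz, norm_zero] at hξ; norm_num at hξ
          · exact h
        have hξQ : Q ξ = ξ := by rw [hQapp, hPξ, sub_zero]
        have hηP : P η = η := by
          have := hQapp η
          rw [hQη] at this
          exact (sub_eq_zero.mp this.symm).symm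
        simp only [ContinuousLinearMap.add_apply, ContinuousLinearMap.mul_apply,
          hPξ, map_zero, inner_zero_left, add_zero, inner_add_left]
        rw [hξQ, hPsa, hηP]
      · have hQξ : Q ξ = 0 := by
          rcases key2 with h | hQη
          · exact h
          · exfalso
            have hz : η = 0 := by
              have := hQapp η; rw [hQη, hPη] at this
              simpa using this.symm
            rw [hz, norm_zero] at hη; norm_num at hη
        have hξP : P ξ = ξ := by
          have := hQapp ξ
          rw [hQξ] at this
          exact (sub_eq_zero.mp this.symm).symm
        have hηQ : Q η = η := by rw [hQapp, hPη, sub_zero]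
        simp only [ContinuousLinearMap.add_apply, ContinuousLinearMap.mul_apply,
          hQξ, map_zero, inner_zero_left, zero_add, inner_add_left]
        rw [hξP, hQsa, hηQ]
    rw [heq]
    calc ‖(inner ℂ ((P * T * Q + Q * T * P) ξ) η : ℂ)‖
        ≤ ‖(P * T * Q + Q * T * P) ξ‖ * ‖η‖ := norm_inner_le_norm _ _
      _ ≤ ‖P * T * Q + Q * T * P‖ * ‖ξ‖ * ‖η‖ := by
          gcongr; exact (P * T * Q + Q * T * P).le_opNorm ξ
      _ = ‖P * T * Q + Q * T * P‖ := by rw [hξ, hη]; ring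
  · -- ‖A‖ ≤ sSup S
    have hB : ∀ ξ : H, ‖(P * T * Q) ξ‖ ≤ sSup S * ‖Q ξ‖ := by
      intro ξ
      by_cases hq : Q ξ = 0
      · simp [ContinuousLinearMap.mul_apply, hq]
      · set u : H := ((‖Q ξ‖ : ℂ))⁻¹ • Q ξ with hudef
        have hun : ‖u‖ = 1 := normalize_norm_one _ hq
        have hPu : P u = 0 := by rw [hudef, map_smul, hPQ, smul_zero]
        have hval : ‖P (T u)‖ ≤ sSup S := by
          by_cases hw : P (T u) = 0
          · rw [hw, norm_zero]; exact hs0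
          · set η : H := ((‖P (T u)‖ : ℂ))⁻¹ • P (T u) with hηdef
            have hηn : ‖η‖ = 1 := normalize_norm_one _ hw
            have hQη : Q η = 0 := by rw [hηdef, map_smul, hQP, smul_zero]
            have hmem : ‖(inner ℂ (T u) η : ℂ)‖ ∈ S :=
              ⟨u, η, hun, hηn, hadm1 u η hPu hQη, rfl⟩
            have hcomp : (inner ℂ (T u) η : ℂ) = (‖P (T u)‖ : ℂ) := by
              rw [hηdef, inner_smul_right]
              have hx : (inner ℂ (T u) (P (T u)) : ℂ)
                  = inner ℂ (P (T u)) (P (T u)) := by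
                conv_lhs => rw [← hPP (T u)]
                rw [← hPsa]
              rw [hx, inner_self_eq_norm_sq_to_K]
              have hnz : (‖P (T u)‖ : ℂ) ≠ 0 :=
                Complex.ofReal_ne_zero.mpr (norm_ne_zero_iff.mpr hw)
              field_simp
              rfl
            have hnorm : ‖(inner ℂ (T u) η : ℂ)‖ = ‖P (T u)‖ := by
              rw [hcomp]; simp
            rw [← hnorm]
            exact le_csSup hbdd hmem
        have hrw : (P * T * Q) ξ = (‖Q ξ‖ : ℂ) • P (T u) := by
          rw [hudef, map_smul, map_smul, smul_smul,
            mul_inv_cancel₀ (by simpa using norm_ne_zero_iff.mpr hq), one_smul]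
          simp [ContinuousLinearMap.mul_apply]
        rw [hrw, norm_smul, Complex.norm_real, norm_norm, mul_comm]
        exact mul_le_mul_of_nonneg_right hval (norm_nonneg _)
    have hC : ∀ ξ : H, ‖(Q * T * P) ξ‖ ≤ sSup S * ‖P ξ‖ := by
      intro ξ
      by_cases hq : P ξ = 0
      · simp [ContinuousLinearMap.mul_apply, hq]
      · set u : H := ((‖P ξ‖ : ℂ))⁻¹ • P ξ with hudef
        have hun : ‖u‖ = 1 := normalize_norm_one _ hq
        have hQu : Q u = 0 := by rw [hudef, map_smul, hQP, smul_zero]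
        have hval : ‖Q (T u)‖ ≤ sSup S := by
          by_cases hw : Q (T u) = 0
          · rw [hw, norm_zero]; exact hs0
          · set η : H := ((‖Q (T u)‖ : ℂ))⁻¹ • Q (T u) with hηdef
            have hηn : ‖η‖ = 1 := normalize_norm_one _ hw
            have hPη : P η = 0 := by rw [hηdef, map_smul, hPQ, smul_zero]
            have hmem : ‖(inner ℂ (T u) η : ℂ)‖ ∈ S :=
              ⟨u, η, hun, hηn, hadm2 u η hQu hPη, rfl⟩
            have hcomp : (inner ℂ (T u) η : ℂ) = (‖Q (T u)‖ : ℂ) := by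
              rw [hηdef, inner_smul_right]
              have hx : (inner ℂ (T u) (Q (T u)) : ℂ)
                  = inner ℂ (Q (T u)) (Q (T u)) := by
                conv_lhs => rw [← hQQ (T u)]
                rw [← hQsa]
              rw [hx, inner_self_eq_norm_sq_to_K]
              have hnz : (‖Q (T u)‖ : ℂ) ≠ 0 :=
                Complex.ofReal_ne_zero.mpr (norm_ne_zero_iff.mpr hw)
              field_simp
              rfl
            have hnorm : ‖(inner ℂ (T u) η : ℂ)‖ = ‖Q (T u)‖ := by
              rw [hcomp]; simp
            rw [← hnorm]
            exact le_csSup hbdd hmem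
        have hrw : (Q * T * P) ξ = (‖P ξ‖ : ℂ) • Q (T u) := by
          rw [hudef, map_smul, map_smul, smul_smul,
            mul_inv_cancel₀ (by simpa using norm_ne_zero_iff.mpr hq), one_smul]
          simp [ContinuousLinearMap.mul_apply]
        rw [hrw, norm_smul, Complex.norm_real, norm_norm, mul_comm]
        exact mul_le_mul_of_nonneg_right hval (norm_nonneg _)
    apply ContinuousLinearMap.opNorm_le_bound _ hs0
    intro ξ
    have horth : (inner ℂ ((P * T * Q) ξ) ((Q * T * P) ξ) : ℂ) = 0 := by
      simp only [ContinuousLinearMap.mul_apply]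
      rw [show P (T (Q ξ)) = P (P (T (Q ξ))) from (hPP _).symm, hPsa, hPQ,
        inner_zero_right]
    have hsq : ‖(P * T * Q + Q * T * P) ξ‖ ^ 2
        = ‖(P * T * Q) ξ‖ ^ 2 + ‖(Q * T * P) ξ‖ ^ 2 := by
      have h := norm_add_sq_eq_norm_sq_add_norm_sq_of_inner_eq_zero _ _ horth
      rw [show (P * T * Q + Q * T * P) ξ = (P * T * Q) ξ + (Q * T * P) ξ from rfl]
      rw [pow_two, pow_two, pow_two]; exact h
    have hBsplit : (P * T * Q) ξ = (P * T * Q) (Q ξ) := by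
      simp only [ContinuousLinearMap.mul_apply, hQQ]
    have hCsplit : (Q * T * P) ξ = (Q * T * P) (P ξ) := by
      simp only [ContinuousLinearMap.mul_apply, hPP]
    have h1' := hB ξ
    have h2' := hC ξ
    have hQξ2 : ‖Q (Q ξ)‖ = ‖Q ξ‖ := by rw [hQQ]
    have hsum : ‖(P * T * Q + Q * T * P) ξ‖ ^ 2 ≤ (sSup S * ‖ξ‖) ^ 2 := by
      have hp := hpyth ξ
      have ha2 := pow_le_pow_left₀ (norm_nonneg ((P * T * Q) ξ)) h1' 2
      have hb2 := pow_le_pow_left₀ (norm_nonneg ((Q * T * P) ξ)) h2' 2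
      calc ‖(P * T * Q + Q * T * P) ξ‖ ^ 2
          = ‖(P * T * Q) ξ‖ ^ 2 + ‖(Q * T * P) ξ‖ ^ 2 := hsq
        _ ≤ (sSup S * ‖Q ξ‖) ^ 2 + (sSup S * ‖P ξ‖) ^ 2 := add_le_add ha2 hb2
        _ = sSup S ^ 2 * (‖P ξ‖ ^ 2 + ‖Q ξ‖ ^ 2) := by ring
        _ = sSup S ^ 2 * ‖ξ‖ ^ 2 := by rw [← hp]
        _ = (sSup S * ‖ξ‖) ^ 2 := by ring
    have hAξ : 0 ≤ ‖(P * T * Q + Q * T * P) ξ‖ := norm_nonneg _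
    have hS' : 0 ≤ sSup S * ‖ξ‖ := mul_nonneg hs0 (norm_nonneg _)
    exact (pow_le_pow_iff_left₀ hAξ hS' two_ne_zero).mp hsum
end

section
/- Let A be a unital C*-algebra. The 2×2 matrices P₁ = [[1,0],[0,0]] and P₂ = (1/2)·[[1,1],[1,1]] over A are projections in M₂(A), and the C*-subalgebra of M₂(A) they generate together with the projections Qᵤ = (1/2)·[[1,u],[u*,1]] for u ranging over any set S of unitaries generating A as a C*-algebra is all of M₂(A). -/
set_option maxHeartbeats 1000000
set_option linter.unreachableTactic false
set_option linter.unusedTactic false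


/-- Let `A` be a unital C*-algebra and `S` a set of unitaries generating
`A` as a C*-algebra. Then `P₁ = [[1,0],[0,0]]`, `P₂ = (1/2)[[1,1],[1,1]]` and
`Qᵤ = (1/2)[[1,u],[u*,1]]` (`u ∈ S`) are projections in `M₂(A)` which together
generate `M₂(A)` as a C*-algebra. -/
theorem matrix_algebra_generated_by_projections
    {A : Type*} [NormedRing A] [StarRing A] [CStarRing A] [NormedAlgebra ℂ A]
    [CompleteSpace A] [StarModule ℂ A]
    (S : Set A) (hS_unitary : ∀ u ∈ S, u ∈ unitary A)
    (hS_gen : (StarAlgebra.adjoin ℂ S).topologicalClosure = ⊤)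
    (P₁ P₂ : Matrix (Fin 2) (Fin 2) A)
    (hP₁ : P₁ = !![1, 0; 0, 0])
    (hP₂ : P₂ = (2 : ℂ)⁻¹ • !![1, 1; 1, 1])
    (Q : A → Matrix (Fin 2) (Fin 2) A)
    (hQ : ∀ u, Q u = (2 : ℂ)⁻¹ • !![1, u; star u, 1]) :
    (star P₁ = P₁ ∧ P₁ * P₁ = P₁) ∧
    (star P₂ = P₂ ∧ P₂ * P₂ = P₂) ∧
    (∀ u ∈ S, star (Q u) = Q u ∧ Q u * Q u = Q u) ∧
    (StarAlgebra.adjoin ℂ ({P₁, P₂} ∪ (Q '' S))).topologicalClosure = ⊤ := by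
  refine ⟨⟨?_, ?_⟩, ⟨?_, ?_⟩, ?_, ?_⟩
  · subst hP₁
    ext i j; fin_cases i <;> fin_cases j <;> simp [Matrix.star_apply]
  · subst hP₁
    ext i j; fin_cases i <;> fin_cases j <;> simp [Matrix.mul_apply, Fin.sum_univ_two]
  · subst hP₂
    ext i j; fin_cases i <;> fin_cases j <;> simp [Matrix.star_apply, Matrix.smul_apply]
  · subst hP₂
    ext i j; fin_cases i <;> fin_cases j <;>
      (simp [Matrix.mul_apply, Fin.sum_univ_two, Matrix.smul_apply, smul_smul] <;> module)
  · intro u hu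
    have h1 : star u * u = 1 := Unitary.star_mul_self_of_mem (hS_unitary u hu)
    have h2 : u * star u = 1 := Unitary.mul_star_self_of_mem (hS_unitary u hu)
    constructor
    · rw [hQ u]
      ext i j; fin_cases i <;> fin_cases j <;> simp [Matrix.star_apply, Matrix.smul_apply]
    · rw [hQ u]
      ext i j; fin_cases i <;> fin_cases j <;>
        (simp [Matrix.mul_apply, Fin.sum_univ_two, Matrix.smul_apply, smul_smul, h1, h2] <;> module)
  · -- generation
    set B := (StarAlgebra.adjoin ℂ ({P₁, P₂} ∪ (Q '' S))).topologicalClosure with hB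
    have hP₁B : P₁ ∈ B := StarSubalgebra.le_topologicalClosure _
      (StarAlgebra.subset_adjoin ℂ _ (Or.inl (Or.inl rfl)))
    have hP₂B : P₂ ∈ B := StarSubalgebra.le_topologicalClosure _
      (StarAlgebra.subset_adjoin ℂ _ (Or.inl (Or.inr rfl)))
    have hQB : ∀ u ∈ S, Q u ∈ B := fun u hu => StarSubalgebra.le_topologicalClosure _
      (StarAlgebra.subset_adjoin ℂ _ (Or.inr ⟨u, hu, rfl⟩))
    -- the off-diagonal matrix unit
    have hE12eq : (2:ℂ) • (P₁ * P₂) - P₁ = (!![0,1;0,0] : Matrix (Fin 2) (Fin 2) A) := by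
      subst hP₁ hP₂
      ext i j; fin_cases i <;> fin_cases j <;>
        (simp [Matrix.mul_apply, Fin.sum_univ_two, Matrix.smul_apply, smul_smul] <;> module)
    have hE12 : (!![0,1;0,0] : Matrix (Fin 2) (Fin 2) A) ∈ B := by
      rw [← hE12eq]
      exact sub_mem (SMulMemClass.smul_mem _ (mul_mem hP₁B hP₂B)) hP₁B
    have hE21eq : star (!![0,1;0,0] : Matrix (Fin 2) (Fin 2) A) = !![0,0;1,0] := by
      ext i j; fin_cases i <;> fin_cases j <;> simp [Matrix.star_apply]
    have hE21 : (!![0,0;1,0] : Matrix (Fin 2) (Fin 2) A) ∈ B := by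
      rw [← hE21eq]; exact star_mem hE12
    -- star u lands in the (1,1) corner
    have hcornerS : ∀ u ∈ S, (!![star u,0;0,0] : Matrix (Fin 2) (Fin 2) A) ∈ B := by
      intro u hu
      have hXeq : (2:ℂ) • (Q u * P₁) - P₁ = (!![0,0;star u,0] : Matrix (Fin 2) (Fin 2) A) := by
        rw [hQ u]; subst hP₁
        ext i j; fin_cases i <;> fin_cases j <;>
          (simp [Matrix.mul_apply, Fin.sum_univ_two, Matrix.smul_apply, smul_smul] <;> module)
      have hX : (!![0,0;star u,0] : Matrix (Fin 2) (Fin 2) A) ∈ B := by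
        rw [← hXeq]
        exact sub_mem (SMulMemClass.smul_mem _ (mul_mem (hQB u hu) hP₁B)) hP₁B
      have hmul : (!![0,1;0,0] : Matrix (Fin 2) (Fin 2) A) * !![0,0;star u,0]
          = !![star u,0;0,0] := by
        ext i j; fin_cases i <;> fin_cases j <;> simp [Matrix.mul_apply, Fin.sum_univ_two]
      rw [← hmul]
      exact mul_mem hE12 hX
    -- the corner star-subalgebra of A
    have emul : ∀ a b : A, (!![a,0;0,0] : Matrix (Fin 2) (Fin 2) A) * !![b,0;0,0]
        = !![a*b,0;0,0] := by
      intro a b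
      ext i j; fin_cases i <;> fin_cases j <;> simp [Matrix.mul_apply, Fin.sum_univ_two]
    let T : StarSubalgebra ℂ A :=
      { carrier := {a : A | (!![a,0;0,0] : Matrix (Fin 2) (Fin 2) A) ∈ B}
        mul_mem' := by
          intro a b ha hb
          show (!![a*b,0;0,0] : Matrix (Fin 2) (Fin 2) A) ∈ B
          rw [← emul a b]; exact mul_mem ha hb
        one_mem' := by
          show (!![(1:A),0;0,0] : Matrix (Fin 2) (Fin 2) A) ∈ B
          rw [← hP₁]; exact hP₁B
        add_mem' := by
          intro a b ha hb
          show (!![a+b,0;0,0] : Matrix (Fin 2) (Fin 2) A) ∈ B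
          have : (!![a+b,0;0,0] : Matrix (Fin 2) (Fin 2) A) = !![a,0;0,0] + !![b,0;0,0] := by
            ext i j; fin_cases i <;> fin_cases j <;> simp
          rw [this]; exact add_mem ha hb
        zero_mem' := by
          show (!![(0:A),0;0,0] : Matrix (Fin 2) (Fin 2) A) ∈ B
          have : (!![(0:A),0;0,0] : Matrix (Fin 2) (Fin 2) A) = 0 := by
            ext i j; fin_cases i <;> fin_cases j <;> simp
          rw [this]; exact zero_mem B
        algebraMap_mem' := by
          intro c
          show (!![algebraMap ℂ A c,0;0,0] : Matrix (Fin 2) (Fin 2) A) ∈ B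
          have : (!![algebraMap ℂ A c,0;0,0] : Matrix (Fin 2) (Fin 2) A) = c • P₁ := by
            subst hP₁
            ext i j; fin_cases i <;> fin_cases j <;>
              simp [Matrix.smul_apply, Algebra.algebraMap_eq_smul_one]
          rw [this]; exact SMulMemClass.smul_mem _ hP₁B
        star_mem' := by
          intro a ha
          show (!![star a,0;0,0] : Matrix (Fin 2) (Fin 2) A) ∈ B
          have : (!![star a,0;0,0] : Matrix (Fin 2) (Fin 2) A) = star !![a,0;0,0] := by
            ext i j; fin_cases i <;> fin_cases j <;> simp [Matrix.star_apply]
          rw [this]; exact star_mem ha }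
    have hTclosed : IsClosed (T : Set A) := by
      have hcont : Continuous fun a : A => (!![a,0;0,0] : Matrix (Fin 2) (Fin 2) A) := by
        apply continuous_matrix
        intro i j
        fin_cases i <;> fin_cases j <;> simp <;> fun_prop
      exact IsClosed.preimage hcont (StarSubalgebra.isClosed_topologicalClosure _)
    have hST : S ⊆ (T : Set A) := by
      intro u hu
      have h1 : star u ∈ T := hcornerS u hu
      have := star_mem (s := T) h1
      rwa [star_star] at this
    have hTtop : ∀ a : A, a ∈ T := by
      intro a
      have : (⊤ : StarSubalgebra ℂ A) ≤ T := by
        rw [← hS_gen]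
        exact StarSubalgebra.topologicalClosure_minimal (StarAlgebra.adjoin_le hST) hTclosed
      exact this trivial
    -- all corners are in B
    have h00 : ∀ a : A, (!![a,0;0,0] : Matrix (Fin 2) (Fin 2) A) ∈ B := fun a => hTtop a
    have h01 : ∀ a : A, (!![0,a;0,0] : Matrix (Fin 2) (Fin 2) A) ∈ B := by
      intro a
      have : (!![0,a;0,0] : Matrix (Fin 2) (Fin 2) A) = !![a,0;0,0] * !![0,1;0,0] := by
        ext i j; fin_cases i <;> fin_cases j <;> simp [Matrix.mul_apply, Fin.sum_univ_two]
      rw [this]; exact mul_mem (h00 a) hE12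
    have h10 : ∀ a : A, (!![0,0;a,0] : Matrix (Fin 2) (Fin 2) A) ∈ B := by
      intro a
      have : (!![0,0;a,0] : Matrix (Fin 2) (Fin 2) A) = !![0,0;1,0] * !![a,0;0,0] := by
        ext i j; fin_cases i <;> fin_cases j <;> simp [Matrix.mul_apply, Fin.sum_univ_two]
      rw [this]; exact mul_mem hE21 (h00 a)
    have h11 : ∀ a : A, (!![0,0;0,a] : Matrix (Fin 2) (Fin 2) A) ∈ B := by
      intro a
      have : (!![0,0;0,a] : Matrix (Fin 2) (Fin 2) A) = !![0,0;a,0] * !![0,1;0,0] := by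
        ext i j; fin_cases i <;> fin_cases j <;> simp [Matrix.mul_apply, Fin.sum_univ_two]
      rw [this]; exact mul_mem (h10 a) hE12
    rw [eq_top_iff]
    intro m _
    have hm : m = !![m 0 0, 0; 0, 0] + !![0, m 0 1; 0, 0] + !![0,0; m 1 0, 0]
        + !![0,0;0, m 1 1] := by
      ext i j; fin_cases i <;> fin_cases j <;> simp
    rw [hm]
    exact add_mem (add_mem (add_mem (h00 _) (h01 _)) (h10 _)) (h11 _)
end

section
/- Let A be a unital C*-algebra generated (as a C*-algebra) by finitely many elements. Then M₂(A) is generated (as a C*-algebra) by finitely many projections. -/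
open Matrix

section Aux2
variable {A : Type*} [CStarAlgebra A]
set_option linter.unusedSectionVars false

private theorem bf_spec [Nontrivial A] (c : A) (hc : IsSelfAdjoint c) (hn : ‖c‖ ≤ 1) :
    IsSelfAdjoint (cfc (fun x : ℝ => Real.sqrt (1 - x^2)) c) ∧
      (cfc (fun x : ℝ => Real.sqrt (1 - x^2)) c) * (cfc (fun x : ℝ => Real.sqrt (1 - x^2)) c)
        = 1 - c * c ∧
      (cfc (fun x : ℝ => Real.sqrt (1 - x^2)) c) * c = c * (cfc (fun x : ℝ => Real.sqrt (1 - x^2)) c) := by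
  have hcont : ContinuousOn (fun x : ℝ => Real.sqrt (1 - x^2)) (spectrum ℝ c) :=
    (Real.continuous_sqrt.comp (by continuity)).continuousOn
  refine ⟨cfc_predicate _ c, ?_, ?_⟩
  · rw [← cfc_mul _ _ c hcont hcont, cfc_congr (g := fun x : ℝ => 1 - x^2) ?_]
    · rw [cfc_sub _ _ c, cfc_const_one ℝ c, cfc_pow _ _ c, cfc_id' ℝ c, sq]
    · intro x hx
      have h1 : |x| ≤ ‖c‖ := by simpa using spectrum.norm_le_norm_of_mem hx
      have h2 : 1 - x^2 ≥ 0 := by nlinarith [abs_nonneg x, sq_abs x]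
      simp only []
      rw [Real.mul_self_sqrt h2]
  · have := cfc_commute_cfc (R := ℝ) (fun x : ℝ => Real.sqrt (1 - x^2)) id c
    rwa [cfc_id ℝ c] at this

private theorem proj_q' : star ((2:ℂ)⁻¹ • (!![(1:A),1;1,1])) = (2:ℂ)⁻¹ • (!![(1:A),1;1,1]) ∧
    ((2:ℂ)⁻¹ • (!![(1:A),1;1,1])) * ((2:ℂ)⁻¹ • (!![(1:A),1;1,1]))
      = (2:ℂ)⁻¹ • (!![(1:A),1;1,1]) := by
  constructor
  · ext i j
    fin_cases i <;> fin_cases j <;>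
      simp [Matrix.star_apply, star_smul, Complex.conj_eq_iff_im]
  · ext i j
    rw [Matrix.smul_mul, Matrix.mul_smul, smul_smul]
    fin_cases i <;> fin_cases j <;>
      simp [Matrix.mul_apply, Fin.sum_univ_two, smul_smul] <;>
      module

private theorem proj_p' (c b : A) (hc : IsSelfAdjoint c) (hb : IsSelfAdjoint b)
    (hb2 : b * b = 1 - c * c) (hcm : b * c = c * b) :
    star ((2:ℂ)⁻¹ • (!![1+c, b; b, 1-c])) = (2:ℂ)⁻¹ • (!![1+c, b; b, 1-c]) ∧
    ((2:ℂ)⁻¹ • (!![1+c, b; b, 1-c])) * ((2:ℂ)⁻¹ • (!![1+c, b; b, 1-c]))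
      = (2:ℂ)⁻¹ • (!![1+c, b; b, 1-c]) := by
  constructor
  · ext i j
    fin_cases i <;> fin_cases j <;>
      simp [Matrix.star_apply, star_smul, Complex.conj_eq_iff_im, hc.star_eq, hb.star_eq]
  · ext i j
    rw [Matrix.smul_mul, Matrix.mul_smul, smul_smul]
    fin_cases i <;> fin_cases j <;>
      simp [Matrix.mul_apply, Fin.sum_univ_two, mul_add, add_mul, mul_sub, sub_mul, hb2, hcm] <;>
      module

private theorem star_sbm (i j : Fin 2) (a : A) :
    star (Matrix.single i j a) = Matrix.single j i (star a) := by
  ext i' j'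
  simp only [Matrix.star_apply, Matrix.single, Matrix.of_apply]
  by_cases h1 : i = j' <;> by_cases h2 : j = i' <;> simp [h1, h2]

private theorem proj_e00 : star (Matrix.single (0:Fin 2) (0:Fin 2) (1:A))
      = Matrix.single 0 0 (1:A) ∧
    Matrix.single (0:Fin 2) (0:Fin 2) (1:A) * Matrix.single 0 0 (1:A)
      = Matrix.single 0 0 (1:A) := by
  refine ⟨by rw [star_sbm, star_one], by rw [Matrix.single_mul_single_same, one_mul]⟩

private theorem m01_eq :
    (2:ℂ) • ((Matrix.single (0:Fin 2) (0:Fin 2) (1:A)) * ((2:ℂ)⁻¹ • !![(1:A),1;1,1])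
        * (1 - Matrix.single 0 0 1))
      = Matrix.single 0 1 (1:A) := by
  ext i j
  fin_cases i <;> fin_cases j <;>
    simp [Matrix.mul_apply, Fin.sum_univ_two, Matrix.one_apply, Matrix.single, smul_smul,
      mul_sub, sub_mul] <;>
    module

private theorem corner_eq (d b : A) :
    (2:ℂ) • ((Matrix.single (0:Fin 2) (0:Fin 2) (1:A)) * ((2:ℂ)⁻¹ • !![1+d, b; b, 1-d])
        * (Matrix.single 0 0 1)) - Matrix.single 0 0 1
      = Matrix.single 0 0 d := by
  ext i j
  fin_cases i <;> fin_cases j <;>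
    simp [Matrix.mul_apply, Fin.sum_univ_two, Matrix.single, smul_smul, smul_add] <;>
    module

private theorem matrix_decomp (X : Matrix (Fin 2) (Fin 2) A) :
    X = ∑ i : Fin 2, ∑ j : Fin 2,
      Matrix.single i 0 (1:A) * Matrix.single 0 0 (X i j) * Matrix.single 0 j 1 := by
  simp only [Matrix.single_mul_single_same, one_mul, mul_one]
  exact Matrix.matrix_eq_sum_single X

end Aux2

/-- If a unital C*-algebra `A` is generated (as a C*-algebra) by finitely
many elements, then `M₂(A)` is generated (as a C*-algebra) by finitely many
projections. -/
theorem matrix_algebra_finitely_generated_by_projections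
    {A : Type*} [NormedRing A] [StarRing A] [CStarRing A] [NormedAlgebra ℂ A]
    [CompleteSpace A] [StarModule ℂ A]
    (F : Finset A) (hF : (StarAlgebra.adjoin ℂ (F : Set A)).topologicalClosure = ⊤) :
    ∃ G : Finset (Matrix (Fin 2) (Fin 2) A),
      (∀ q ∈ G, star q = q ∧ q * q = q) ∧
      (StarAlgebra.adjoin ℂ (G : Set (Matrix (Fin 2) (Fin 2) A))).topologicalClosure = ⊤ := by
  classical
  rcases subsingleton_or_nontrivial A with hA | hA
  · refine ⟨∅, by simp, ?_⟩
    exact eq_top_iff.2 fun x _ =>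
      (Subsingleton.elim (0 : Matrix (Fin 2) (Fin 2) A) x) ▸ zero_mem _
  · letI : CStarAlgebra A := {}
    set e00 : Matrix (Fin 2) (Fin 2) A := Matrix.single 0 0 1 with he00def
    set q0 : Matrix (Fin 2) (Fin 2) A := (2:ℂ)⁻¹ • !![1,1;1,1] with hq0def
    set bf : A → A := fun d => cfc (fun x : ℝ => Real.sqrt (1 - x^2)) d with hbfdef
    set pm : A → Matrix (Fin 2) (Fin 2) A :=
      fun d => (2:ℂ)⁻¹ • !![1 + d, bf d; bf d, 1 - d] with hpmdef
    set nr : A → A := fun d => ((‖d‖ + 1 : ℝ)⁻¹ : ℂ) • d with hnrdef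
    set re : A → A := fun a => (2:ℂ)⁻¹ • (a + star a) with hredef
    set im : A → A := fun a => (Complex.I * (2:ℂ)⁻¹) • (star a - a) with himdef
    -- selfadjointness and norm facts
    have hre_sa : ∀ a : A, _root_.IsSelfAdjoint (re a) := by
      intro a
      show star ((2:ℂ)⁻¹ • (a + star a)) = (2:ℂ)⁻¹ • (a + star a)
      rw [star_smul, star_add, star_star, add_comm,
        show star ((2:ℂ)⁻¹) = (2:ℂ)⁻¹ by simp [Complex.ext_iff, Complex.star_def]]
    have him_sa : ∀ a : A, _root_.IsSelfAdjoint (im a) := by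
      intro a
      show star ((Complex.I * (2:ℂ)⁻¹) • (star a - a)) = (Complex.I * (2:ℂ)⁻¹) • (star a - a)
      rw [star_smul, star_sub, star_star,
        show star (Complex.I * (2:ℂ)⁻¹) = -(Complex.I * (2:ℂ)⁻¹) by
          simp [Complex.ext_iff, Complex.star_def],
        neg_smul, ← smul_neg, neg_sub]
    have hnr_sa : ∀ d : A, _root_.IsSelfAdjoint d → _root_.IsSelfAdjoint (nr d) := by
      intro d hd
      show star (((‖d‖ + 1 : ℝ)⁻¹ : ℂ) • d) = ((‖d‖ + 1 : ℝ)⁻¹ : ℂ) • d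
      rw [star_smul, hd.star_eq]
      congr 1
      simp [Complex.ext_iff, Complex.star_def]
    have hnr_norm : ∀ d : A, ‖nr d‖ ≤ 1 := by
      intro d
      have hx : (0:ℝ) < ‖d‖ + 1 := by positivity
      have : ‖nr d‖ = (‖d‖ + 1)⁻¹ * ‖d‖ := by
        simp only [hnrdef]
        rw [norm_smul, norm_inv, Complex.norm_real, Real.norm_eq_abs, abs_of_pos hx]
      rw [this, inv_mul_eq_div, div_le_one hx]
      linarith [norm_nonneg d]
    have hpm_proj : ∀ d : A, _root_.IsSelfAdjoint d → ‖d‖ ≤ 1 →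
        star (pm d) = pm d ∧ pm d * pm d = pm d := by
      intro d hd hd1
      obtain ⟨hb_sa, hb2, hcm⟩ := bf_spec d hd hd1
      exact proj_p' d (bf d) hd hb_sa hb2 hcm
    -- the generating set
    refine ⟨insert e00 (insert q0
      ((F.image fun a => pm (nr (re a))) ∪ (F.image fun a => pm (nr (im a))))), ?_, ?_⟩
    · intro x hx
      simp only [Finset.mem_insert, Finset.mem_union, Finset.mem_image] at hx
      rcases hx with rfl | rfl | ⟨a, _, rfl⟩ | ⟨a, _, rfl⟩
      · exact proj_e00
      · exact proj_q'
      · exact hpm_proj _ (hnr_sa _ (hre_sa a)) (hnr_norm _)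
      · exact hpm_proj _ (hnr_sa _ (him_sa a)) (hnr_norm _)
    · set G : Finset (Matrix (Fin 2) (Fin 2) A) := insert e00 (insert q0
        ((F.image fun a => pm (nr (re a))) ∪ (F.image fun a => pm (nr (im a))))) with hGdef
      set S := (StarAlgebra.adjoin ℂ (G : Set (Matrix (Fin 2) (Fin 2) A))).topologicalClosure
        with hSdef
      have memS : ∀ x ∈ G, x ∈ S := fun x hx =>
        StarSubalgebra.le_topologicalClosure _ (StarAlgebra.subset_adjoin ℂ _ hx)
      have he00S : e00 ∈ S := memS _ (by simp [hGdef])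
      have hq0S : q0 ∈ S := memS _ (by simp [hGdef])
      have hm01S : Matrix.single (0:Fin 2) (1:Fin 2) (1:A) ∈ S := by
        rw [← m01_eq]
        rw [Algebra.smul_def]
        exact mul_mem (S.algebraMap_mem _)
          (mul_mem (mul_mem he00S hq0S) (sub_mem (one_mem S) he00S))
      have hm10S : Matrix.single (1:Fin 2) (0:Fin 2) (1:A) ∈ S := by
        have := star_mem (s := S) hm01S
        rwa [star_sbm, star_one] at this
      -- corner elements
      have hcorner : ∀ d : A, pm d ∈ S → Matrix.single (0:Fin 2) (0:Fin 2) d ∈ S := by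
        intro d hpmS
        rw [← corner_eq d (bf d)]
        refine sub_mem ?_ he00S
        rw [Algebra.smul_def]
        exact mul_mem (S.algebraMap_mem _) (mul_mem (mul_mem he00S hpmS) he00S)
      -- the corner subalgebra of A
      let T : StarSubalgebra ℂ A :=
        { carrier := {a : A | Matrix.single (0:Fin 2) (0:Fin 2) a ∈ S}
          mul_mem' := fun {x y} hx hy => by
            have hx' : Matrix.single (0:Fin 2) (0:Fin 2) x ∈ S := hx
            have hy' : Matrix.single (0:Fin 2) (0:Fin 2) y ∈ S := hy
            have := mul_mem hx' hy'
            rwa [Matrix.single_mul_single_same] at this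
          one_mem' := he00S
          add_mem' := fun {x y} hx hy => by
            have hx' : Matrix.single (0:Fin 2) (0:Fin 2) x ∈ S := hx
            have hy' : Matrix.single (0:Fin 2) (0:Fin 2) y ∈ S := hy
            have := add_mem hx' hy'
            rwa [← Matrix.single_add] at this
          zero_mem' := by
            show Matrix.single (0:Fin 2) (0:Fin 2) (0:A) ∈ S
            rw [Matrix.single_zero]
            exact zero_mem S
          algebraMap_mem' := fun z => by
            show Matrix.single (0:Fin 2) (0:Fin 2) (algebraMap ℂ A z) ∈ S
            have : algebraMap ℂ A z = z • (1:A) := by rw [Algebra.algebraMap_eq_smul_one]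
            rw [this, ← Matrix.smul_single, Algebra.smul_def]
            exact mul_mem (S.algebraMap_mem _) he00S
          star_mem' := fun {x} hx => by
            have hx' : Matrix.single (0:Fin 2) (0:Fin 2) x ∈ S := hx
            have := star_mem (s := S) hx'
            rwa [star_sbm] at this }
      have hT_closed : IsClosed (T : Set A) := by
        have : (T : Set A) = (fun a : A => Matrix.single (0:Fin 2) (0:Fin 2) a) ⁻¹' (S : Set _) := rfl
        rw [this]
        refine IsClosed.preimage ?_ (StarSubalgebra.isClosed_topologicalClosure _)
        refine continuous_matrix fun i j => ?_
        by_cases h : (0:Fin 2) = i ∧ (0:Fin 2) = j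
        · obtain ⟨hi, hj⟩ := h
          subst hi; subst hj
          simpa [Matrix.single] using (continuous_id' : Continuous (fun a : A => a))
        · simpa [Matrix.single, h] using continuous_const (y := (0:A))
      -- F ⊆ T
      have hFT : (F : Set A) ⊆ (T : Set A) := by
        intro a ha
        have hre_mem : nr (re a) ∈ T := hcorner _ (memS _ (by
          simp only [hGdef, Finset.mem_insert, Finset.mem_union, Finset.mem_image]
          exact Or.inr (Or.inr (Or.inl ⟨a, ha, rfl⟩))))
        have him_mem : nr (im a) ∈ T := hcorner _ (memS _ (by
          simp only [hGdef, Finset.mem_insert, Finset.mem_union, Finset.mem_image]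
          exact Or.inr (Or.inr (Or.inr ⟨a, ha, rfl⟩))))
        have hre_mem' : re a ∈ T := by
          have := T.smul_mem hre_mem ((‖re a‖ + 1 : ℝ) : ℂ)
          rwa [hnrdef, smul_smul, show (((‖re a‖ + 1 : ℝ) : ℂ) * ((‖re a‖ + 1 : ℝ)⁻¹ : ℂ)) = 1 by
            rw [← Complex.ofReal_inv, ← Complex.ofReal_mul,
              mul_inv_cancel₀ (by positivity), Complex.ofReal_one], one_smul] at this
        have him_mem' : im a ∈ T := by
          have := T.smul_mem him_mem ((‖im a‖ + 1 : ℝ) : ℂ)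
          rwa [hnrdef, smul_smul, show (((‖im a‖ + 1 : ℝ) : ℂ) * ((‖im a‖ + 1 : ℝ)⁻¹ : ℂ)) = 1 by
            rw [← Complex.ofReal_inv, ← Complex.ofReal_mul,
              mul_inv_cancel₀ (by positivity), Complex.ofReal_one], one_smul] at this
        have : re a + Complex.I • im a = a := by
          simp only [hredef, himdef, smul_smul, ← mul_assoc, Complex.I_mul_I]
          module
        rw [← this]
        exact T.add_mem hre_mem' (T.smul_mem him_mem' Complex.I)
      have hTall : ∀ a : A, Matrix.single (0:Fin 2) (0:Fin 2) a ∈ S := by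
        intro a
        have hle : (StarAlgebra.adjoin ℂ (F : Set A)).topologicalClosure ≤ T :=
          StarSubalgebra.topologicalClosure_minimal (StarAlgebra.adjoin_le hFT) hT_closed
        rw [hF] at hle
        exact hle trivial
      -- conclude
      rw [eq_top_iff]
      intro X _
      rw [matrix_decomp X]
      refine sum_mem fun i _ => sum_mem fun j _ => ?_
      refine mul_mem (mul_mem ?_ (hTall _)) ?_
      · fin_cases i
        · exact he00S
        · exact hm10S
      · fin_cases j
        · exact he00S
        · exact hm01S
end
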